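/- arXiv:1910.09596 — 5 statements merged into one kernel-verified Lean document; each statement's English description precedes it below -/
import Mathlib

section
/- Tsirelson's bound: if A, A', B, B' are self-adjoint operators on a Hilbert space with A² = A'² = B² = B'² = 1, A and A' commute with B and B', then the operator C = A⊗B + A⊗B' + A'⊗B - A'⊗B' (or AB + AB' + A'B - A'B' in the commuting framework) satisfies ‖C‖ ≤ 2√2. -/
/-!
Write `C = a b + a b' + a' b - a' b'`. When each of `a, a'` commutes with each of `b, b'` and all
four square to `1`, expanding gives `C² = 4 - [a, a'] [b, b']`. In a C⋆-ring involutions that are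
self-adjoint have norm at most `1`, so each commutator has norm at most `2` and `‖C²‖ ≤ 8`.
Since `C` is self-adjoint, the C⋆-identity gives `‖C‖² = ‖C²‖ ≤ 8`.
-/

section Ring
variable {R : Type*} [Ring R]

/-- The Clauser–Horne–Shimony–Holt operator. -/
def chsh (a a' b b' : R) : R := a * b + a * b' + a' * b - a' * b'

theorem chsh_mul_self {a a' b b' : R} (ha : a * a = 1) (ha' : a' * a' = 1)
    (hb : b * b = 1) (hb' : b' * b' = 1) (hab : Commute a b) (hab' : Commute a b')
    (ha'b : Commute a' b) (ha'b' : Commute a' b') :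
    chsh a a' b b' * chsh a a' b b' = 4 - (a * a' - a' * a) * (b * b' - b' * b) := by
  have swap : ∀ {x y : R}, Commute x y → ∀ z, y * (x * z) = x * (y * z) :=
    fun h z => (h.left_comm z).symm
  have cancel : ∀ {x : R}, x * x = 1 → ∀ z, x * (x * z) = z := fun h z => by
    rw [← mul_assoc, h, one_mul]
  rw [show (4 : R) = 1 + 1 + 1 + 1 by norm_num]
  simp only [chsh, mul_add, add_mul, mul_sub, sub_mul, mul_assoc, swap hab, swap hab', swap ha'b,
    swap ha'b', cancel ha, cancel ha', ha, ha', hb, hb', mul_one]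
  abel

theorem IsSelfAdjoint.chsh [StarRing R] {a a' b b' : R} (ha : IsSelfAdjoint a)
    (ha' : IsSelfAdjoint a') (hb : IsSelfAdjoint b) (hb' : IsSelfAdjoint b')
    (hab : Commute a b) (hab' : Commute a b') (ha'b : Commute a' b) (ha'b' : Commute a' b') :
    IsSelfAdjoint (chsh a a' b b') :=
  ((((ha.commute_iff hb).mp hab).add ((ha.commute_iff hb').mp hab')).add
    ((ha'.commute_iff hb).mp ha'b)).sub ((ha'.commute_iff hb').mp ha'b')

end Ring

theorem norm_commutator_le {R : Type*} [NonUnitalSeminormedRing R] (a b : R) :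
    ‖a * b - b * a‖ ≤ 2 * ‖a‖ * ‖b‖ := by
  have := norm_sub_le_of_le (norm_mul_le a b) (norm_mul_le b a)
  linarith [mul_comm ‖a‖ ‖b‖]

section CStarRing
variable {R : Type*} [NormedRing R] [StarRing R] [CStarRing R]

theorem CStarRing.norm_one_le : ‖(1 : R)‖ ≤ 1 := by
  have h : ‖(1 : R)‖ = ‖(1 : R)‖ ^ 2 := by simpa using (IsSelfAdjoint.one R).norm_mul_self
  nlinarith [norm_nonneg (1 : R)]

theorem IsSelfAdjoint.norm_le_one_of_mul_self_eq_one {a : R} (ha : IsSelfAdjoint a)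
    (h : a * a = 1) : ‖a‖ ≤ 1 := by
  rw [← sq_le_one_iff₀ (norm_nonneg a), ← ha.norm_mul_self, h]
  exact CStarRing.norm_one_le

theorem norm_chsh_le {a a' b b' : R} (ha : IsSelfAdjoint a) (ha' : IsSelfAdjoint a')
    (hb : IsSelfAdjoint b) (hb' : IsSelfAdjoint b') (ha2 : a * a = 1) (ha'2 : a' * a' = 1)
    (hb2 : b * b = 1) (hb'2 : b' * b' = 1) (hab : Commute a b) (hab' : Commute a b')
    (ha'b : Commute a' b) (ha'b' : Commute a' b') :
    ‖chsh a a' b b'‖ ≤ 2 * √2 := by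
  have norm_commutator_le_two : ∀ {x y : R}, IsSelfAdjoint x → IsSelfAdjoint y →
      x * x = 1 → y * y = 1 → ‖x * y - y * x‖ ≤ 2 := by
    intro x y hx hy hx2 hy2
    have := hx.norm_le_one_of_mul_self_eq_one hx2
    have := hy.norm_le_one_of_mul_self_eq_one hy2
    nlinarith [norm_commutator_le x y, norm_nonneg x, norm_nonneg y]
  have norm_four : ‖(4 : R)‖ ≤ 4 := by
    have h := Nat.norm_cast_le (α := R) 4
    rw [Nat.cast_ofNat, Nat.cast_ofNat] at h
    linarith [CStarRing.norm_one_le (R := R)]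
  have norm_sq_le : ‖chsh a a' b b' * chsh a a' b b'‖ ≤ 8 := by
    rw [chsh_mul_self ha2 ha'2 hb2 hb'2 hab hab' ha'b ha'b']
    calc _ ≤ ‖(4 : R)‖ + ‖a * a' - a' * a‖ * ‖b * b' - b' * b‖ :=
          norm_sub_le_of_le le_rfl (norm_mul_le _ _)
      _ ≤ 4 + 2 * 2 := by
          gcongr
          exacts [norm_commutator_le_two ha ha' ha2 ha'2, norm_commutator_le_two hb hb' hb2 hb'2]
      _ = 8 := by norm_num
  rw [← pow_le_pow_iff_left₀ (norm_nonneg _) (by positivity) two_ne_zero,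
    ← (ha.chsh ha' hb hb' hab hab' ha'b ha'b').norm_mul_self, mul_pow, Real.sq_sqrt zero_le_two]
  linarith

end CStarRing

theorem tsirelson_bound_general {E : Type*} [NormedAddCommGroup E] [InnerProductSpace ℂ E]
    [CompleteSpace E]
    (A A' B B' : E →L[ℂ] E)
    (hA : IsSelfAdjoint A) (hA' : IsSelfAdjoint A')
    (hB : IsSelfAdjoint B) (hB' : IsSelfAdjoint B')
    (hA2 : A * A = 1) (hA'2 : A' * A' = 1) (hB2 : B * B = 1) (hB'2 : B' * B' = 1)
    (hAB : Commute A B) (hAB' : Commute A B') (hA'B : Commute A' B)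
    (hA'B' : Commute A' B') :
    ‖A * B + A * B' + A' * B - A' * B'‖ ≤ 2 * Real.sqrt 2 :=
  norm_chsh_le hA hA' hB hB' hA2 hA'2 hB2 hB'2 hAB hAB' hA'B hA'B'

/-- Tsirelson's bound: if `A, A', B, B'` are self-adjoint involutions on a
finite-dimensional complex Hilbert space such that each of `A, A'` commutes
with each of `B, B'`, then `‖A*B + A*B' + A'*B - A'*B'‖ ≤ 2√2`. -/
theorem tsirelson_bound {E : Type*} [NormedAddCommGroup E] [InnerProductSpace ℂ E]
    [FiniteDimensional ℂ E] [CompleteSpace E]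
    (A A' B B' : E →L[ℂ] E)
    (hA : IsSelfAdjoint A) (hA' : IsSelfAdjoint A')
    (hB : IsSelfAdjoint B) (hB' : IsSelfAdjoint B')
    (hA2 : A * A = 1) (hA'2 : A' * A' = 1) (hB2 : B * B = 1) (hB'2 : B' * B' = 1)
    (hAB : Commute A B) (hAB' : Commute A B') (hA'B : Commute A' B)
    (hA'B' : Commute A' B') :
    ‖A * B + A * B' + A' * B - A' * B'‖ ≤ 2 * Real.sqrt 2 :=
  tsirelson_bound_general A A' B B' hA hA' hB hB' hA2 hA'2 hB2 hB'2 hAB hAB' hA'B hA'B'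
end

section
/- A frame function over product bases f : σ(H) → ℝ on a bipartite system that satisfies the no-signalling condition (8) is invariant under local two-dimensional rotations of basis elements: if x ∈ H₁ is a unit vector and v₁, v₂ and w₁, w₂ are pairs of orthonormal vectors in H₂ spanning the same two-dimensional subspace, then f(x⊗v₁) + f(x⊗v₂) = f(x⊗w₁) + f(x⊗w₂). -/
/-!
Both orthonormal pairs are completed to orthonormal bases of `H₂` by one and the same orthonormal
basis of the orthogonal complement of their common span. No-signalling makes the sums of `f` over
the two product families `x ⊗ ·` equal, and the shared complementary terms cancel.
-/

/-- The elementary tensor of two vectors, realised in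
`EuclideanSpace ℂ (Fin n × Fin m) ≅ ℂⁿ ⊗ ℂᵐ`. -/
noncomputable def prodVec {n m : ℕ} (x : EuclideanSpace ℂ (Fin n))
    (y : EuclideanSpace ℂ (Fin m)) : EuclideanSpace ℂ (Fin n × Fin m) :=
  (WithLp.equiv 2 _).symm fun p => x p.1 * y p.2

open Module Submodule Set

section

variable {𝕜 E ι κ κ' M : Type*} [RCLike 𝕜] [NormedAddCommGroup E] [InnerProductSpace 𝕜 E]

theorem Orthonormal.sumElim {v : κ → E} {u : κ' → E} (hv : Orthonormal 𝕜 v)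
    (hu : Orthonormal 𝕜 u) (hvu : ∀ i j, inner 𝕜 (v i) (u j) = 0) :
    Orthonormal 𝕜 (Sum.elim v u) := by
  refine ⟨Sum.forall.2 ⟨hv.1, hu.1⟩, ?_⟩
  rintro (i | i) (j | j) hij
  · exact hv.2 fun h => hij (congrArg Sum.inl h)
  · exact hvu i j
  · exact inner_eq_zero_symm.1 (hvu j i)
  · exact hu.2 fun h => hij (congrArg Sum.inr h)

theorem Orthonormal.exists_orthonormalBasis_sum_eq_add [FiniteDimensional 𝕜 E] [Fintype ι]
    [Fintype κ] [Fintype κ'] [AddCommMonoid M] (g : E → M)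
    {v : κ → E} {u : κ' → E} (hv : Orthonormal 𝕜 v) (hu : Orthonormal 𝕜 u)
    (hvu : ∀ i j, inner 𝕜 (v i) (u j) = 0)
    (hcard : Fintype.card κ + Fintype.card κ' = finrank 𝕜 E)
    (hι : Fintype.card ι = finrank 𝕜 E) :
    ∃ b : OrthonormalBasis ι 𝕜 E, ∑ i, g (b i) = ∑ k, g (v k) + ∑ j, g (u j) := by
  have hon := hv.sumElim hu hvu
  have hsum_card : Fintype.card (κ ⊕ κ') = finrank 𝕜 E := by rw [Fintype.card_sum, hcard]
  let e : κ ⊕ κ' ≃ ι := Fintype.equivOfCardEq (hsum_card.trans hι.symm)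
  let b := OrthonormalBasis.mk hon
    (hon.linearIndependent.span_eq_top_of_card_eq_finrank' hsum_card).ge
  refine ⟨b.reindex e, ?_⟩
  rw [← e.sum_comp, Fintype.sum_sum_type]
  simp [b]

theorem Orthonormal.sum_eq_of_span_eq [FiniteDimensional 𝕜 E] [Fintype ι] [Fintype κ]
    [AddCancelCommMonoid M] {g : E → M} (hι : Fintype.card ι = finrank 𝕜 E)
    (hg : ∀ b b' : OrthonormalBasis ι 𝕜 E, ∑ i, g (b i) = ∑ i, g (b' i))
    {v w : κ → E} (hv : Orthonormal 𝕜 v) (hw : Orthonormal 𝕜 w)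
    (hspan : span 𝕜 (range v) = span 𝕜 (range w)) :
    ∑ k, g (v k) = ∑ k, g (w k) := by
  set K := span 𝕜 (range v)
  let u := stdOrthonormalBasis 𝕜 Kᗮ
  have hu : Orthonormal 𝕜 fun j => (u j : E) := u.orthonormal.comp_linearIsometry Kᗮ.subtypeₗᵢ
  have hcard : Fintype.card κ + Fintype.card (Fin (finrank 𝕜 Kᗮ)) = finrank 𝕜 E := by
    rw [Fintype.card_fin, ← finrank_span_eq_card hv.linearIndependent,
      finrank_add_finrank_orthogonal]
  have hperp : ∀ {x : κ → E}, range x ⊆ K → ∀ k j, inner 𝕜 (x k) (u j : E) = 0 :=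
    fun hx k j => inner_right_of_mem_orthogonal (hx (mem_range_self k)) (u j).2
  obtain ⟨bv, hbv⟩ := hv.exists_orthonormalBasis_sum_eq_add g hu (hperp subset_span) hcard hι
  obtain ⟨bw, hbw⟩ := hw.exists_orthonormalBasis_sum_eq_add g hu
    (hperp (hspan ▸ subset_span)) hcard hι
  exact add_right_cancel (hbv.symm.trans ((hg bv bw).trans hbw))

end

theorem nonsignalling_frame_function_two_dim_invariance_general {n m : ℕ}
    (f : EuclideanSpace ℂ (Fin n × Fin m) → ℝ)
    (hns₂ : ∀ x : EuclideanSpace ℂ (Fin n), ‖x‖ = 1 →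
      ∀ v w : OrthonormalBasis (Fin m) ℂ (EuclideanSpace ℂ (Fin m)),
      ∑ j, f (prodVec x (v j)) = ∑ k, f (prodVec x (w k)))
    (x : EuclideanSpace ℂ (Fin n)) (hx : ‖x‖ = 1)
    (v₁ v₂ w₁ w₂ : EuclideanSpace ℂ (Fin m))
    (hv : Orthonormal ℂ ![v₁, v₂]) (hw : Orthonormal ℂ ![w₁, w₂])
    (hspan : Submodule.span ℂ {v₁, v₂} = Submodule.span ℂ {w₁, w₂}) :
    f (prodVec x v₁) + f (prodVec x v₂) = f (prodVec x w₁) + f (prodVec x w₂) := by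
  have h := hv.sum_eq_of_span_eq (g := fun y => f (prodVec x y)) (by simp) (hns₂ x hx) hw
    (by rwa [Matrix.range_cons_cons_empty, Matrix.range_cons_cons_empty])
  simpa only [Fin.sum_univ_two, Matrix.cons_val_zero, Matrix.cons_val_one] using h

/-- A frame function over product bases satisfying the no-signalling condition
is invariant under local two-dimensional rotations of basis elements: for a
unit vector `x` in the first factor and orthonormal pairs `v₁, v₂` and
`w₁, w₂` in the second factor spanning the same two-dimensional subspace,
`f(x⊗v₁) + f(x⊗v₂) = f(x⊗w₁) + f(x⊗w₂)`. -/
theorem nonsignalling_frame_function_two_dim_invariance {n m : ℕ}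
    (f : EuclideanSpace ℂ (Fin n × Fin m) → ℝ) (W : ℝ)
    (hweight : ∀ (b₁ : OrthonormalBasis (Fin n) ℂ (EuclideanSpace ℂ (Fin n)))
      (b₂ : OrthonormalBasis (Fin m) ℂ (EuclideanSpace ℂ (Fin m))),
      ∑ j, ∑ k, f (prodVec (b₁ j) (b₂ k)) = W)
    (hns₂ : ∀ x : EuclideanSpace ℂ (Fin n), ‖x‖ = 1 →
      ∀ v w : OrthonormalBasis (Fin m) ℂ (EuclideanSpace ℂ (Fin m)),
      ∑ j, f (prodVec x (v j)) = ∑ k, f (prodVec x (w k)))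
    (hns₁ : ∀ y : EuclideanSpace ℂ (Fin m), ‖y‖ = 1 →
      ∀ v w : OrthonormalBasis (Fin n) ℂ (EuclideanSpace ℂ (Fin n)),
      ∑ j, f (prodVec (v j) y) = ∑ k, f (prodVec (w k) y))
    (x : EuclideanSpace ℂ (Fin n)) (hx : ‖x‖ = 1)
    (v₁ v₂ w₁ w₂ : EuclideanSpace ℂ (Fin m))
    (hv : Orthonormal ℂ ![v₁, v₂]) (hw : Orthonormal ℂ ![w₁, w₂])
    (hspan : Submodule.span ℂ {v₁, v₂} = Submodule.span ℂ {w₁, w₂}) :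
    f (prodVec x v₁) + f (prodVec x v₂) = f (prodVec x w₁) + f (prodVec x w₂) :=
  nonsignalling_frame_function_two_dim_invariance_general f hns₂ x hx v₁ v₂ w₁ w₂ hv hw hspan
end

section
/- Conversely, if a function f on product unit vectors of H₁⊗H₂ has constant sum W on all product bases and satisfies the two-dimensional subspace invariance (f(x⊗v₁)+f(x⊗v₂) = f(x⊗w₁)+f(x⊗w₂) whenever span{v₁,v₂} = span{w₁,w₂} with each pair orthonormal), then f satisfies the no-signalling condition: ∑ⱼ f(x⊗vⱼ) = ∑ₖ f(x⊗wₖ) for any two orthonormal bases (vⱼ), (wₖ) of H₂ and any unit vector x ∈ H₁. -/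
/-!
Fix the unit vector `x` and put `F y = f (x ⊗ y)`. If `F` is invariant both under replacing an
orthonormal pair by another one spanning the same plane and under phases `y ↦ c • y`, then `∑ F`
is the same on all orthonormal bases of a subspace. Indeed, a unit vector `u = c • v₀ + z` of the
span of an orthonormal family `v₀, v₁, …` can be made its first vector without changing the span
or `∑ F`: by induction the tail is arranged to start with `z / ‖z‖`, and a rotation in the plane
of `v₀` and `z` carries `v₀` to `u` (a phase change if `z = 0`). The remaining vectors then span
the orthogonal complement of `u` in the subspace, and induction on the dimension concludes.

Phase invariance follows from pair invariance, using a unit vector orthogonal to `y`, when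
`dim H₂ ≥ 2`. When `dim H₂ = 1` there is no such vector; instead, replacing one vector `x` of a
basis of `H₁` by `c • x` changes only its row in the constant weight `W`, and
`x ⊗ c • y = c • x ⊗ y`.
-/

open Submodule Set

section

variable {𝕜 E : Type*} [RCLike 𝕜] [NormedAddCommGroup E] [InnerProductSpace 𝕜 E]

local notation "⟪" x ", " y "⟫" => inner 𝕜 x y

theorem orthonormal_cons_iff {k : ℕ} {x : E} {g : Fin k → E} :
    Orthonormal 𝕜 (Fin.cons x g : Fin (k + 1) → E) ↔
      ‖x‖ = 1 ∧ Orthonormal 𝕜 g ∧ span 𝕜 (range g) ≤ (𝕜 ∙ x)ᗮ := by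
  classical
  have hx : (‖x‖ : 𝕜) ^ 2 = 1 ↔ ‖x‖ = 1 := by
    norm_cast; exact pow_eq_one_iff_of_nonneg (norm_nonneg x) two_ne_zero
  simp only [orthonormal_iff_ite, Fin.forall_fin_succ, Fin.cons_zero, Fin.cons_succ,
    span_le, range_subset_iff, SetLike.mem_coe, mem_orthogonal_singleton_iff_inner_right,
    inner_self_eq_norm_sq_to_K, Fin.succ_inj, (Fin.succ_ne_zero _).symm, Fin.succ_ne_zero,
    if_true, if_false, hx, inner_eq_zero_symm (x := g _), forall_and]
  tauto

theorem orthonormal_pair_iff {x y : E} :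
    Orthonormal 𝕜 ![x, y] ↔ ‖x‖ = 1 ∧ ‖y‖ = 1 ∧ ⟪x, y⟫ = 0 := by
  rw [Matrix.vecCons, orthonormal_cons_iff, Matrix.vecCons, orthonormal_cons_iff]
  simp [Orthonormal.of_isEmpty, mem_orthogonal_singleton_iff_inner_right]

theorem span_range_cons {k : ℕ} (x : E) (g : Fin k → E) :
    span 𝕜 (range (Fin.cons x g : Fin (k + 1) → E)) = (𝕜 ∙ x) ⊔ span 𝕜 (range g) := by
  rw [Fin.range_cons, span_insert]

theorem span_range_eq_inf_orthogonal_of_orthonormal_cons {k : ℕ} {x : E} {g : Fin k → E}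
    (h : Orthonormal 𝕜 (Fin.cons x g : Fin (k + 1) → E)) :
    span 𝕜 (range g) = span 𝕜 (range (Fin.cons x g : Fin (k + 1) → E)) ⊓ (𝕜 ∙ x)ᗮ := by
  rw [span_range_cons, sup_comm, sup_inf_assoc_of_le _ (orthonormal_cons_iff.mp h).2.2,
    inf_orthogonal_eq_bot, sup_bot_eq]

/-- The coefficient matrix `!![c, -conj d; d, conj c]` is unitary. -/
theorem orthonormal_rotate {p q : E} (h : Orthonormal 𝕜 ![p, q]) {c d : 𝕜}
    (hcd : ‖c‖ ^ 2 + ‖d‖ ^ 2 = 1) :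
    Orthonormal 𝕜 ![c • p + d • q, -(starRingEnd 𝕜 d) • p + starRingEnd 𝕜 c • q] ∧
      span 𝕜 {c • p + d • q, -(starRingEnd 𝕜 d) • p + starRingEnd 𝕜 c • q} = span 𝕜 {p, q} := by
  obtain ⟨hp, hq, hpq⟩ := orthonormal_pair_iff.mp h
  have hqp : ⟪q, p⟫ = 0 := inner_eq_zero_symm.mp hpq
  have hpp : ⟪p, p⟫ = 1 := by simp [inner_self_eq_norm_sq_to_K, hp]
  have hqq : ⟪q, q⟫ = 1 := by simp [inner_self_eq_norm_sq_to_K, hq]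
  have hcd' : (‖c‖ : 𝕜) ^ 2 + (‖d‖ : 𝕜) ^ 2 = 1 := by exact_mod_cast hcd
  have hon : Orthonormal 𝕜 ![c • p + d • q, -(starRingEnd 𝕜 d) • p + starRingEnd 𝕜 c • q] := by
    rw [orthonormal_iff_ite]
    intro i j
    fin_cases i <;> fin_cases j <;>
      simp only [Fin.zero_eta, Fin.mk_one, Matrix.cons_val_zero, Matrix.cons_val_one,
        inner_add_left, inner_add_right, inner_smul_left, inner_smul_right, hpp,
        hqq, hpq, hqp, RCLike.conj_conj, map_neg] <;>
      simp [RCLike.mul_conj, mul_comm] <;> linear_combination hcd'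
  have : FiniteDimensional 𝕜 (span 𝕜 {p, q}) := FiniteDimensional.span_of_finite 𝕜 (toFinite _)
  refine ⟨hon, eq_of_le_of_finrank_eq ?_ ?_⟩
  · rw [span_le]
    rintro _ (rfl | rfl)
    exacts [mem_span_pair.mpr ⟨c, d, rfl⟩, mem_span_pair.mpr ⟨_, _, rfl⟩]
  · rw [← Matrix.range_cons_cons_empty _ _ ![], ← Matrix.range_cons_cons_empty p q ![],
      finrank_span_eq_card hon.linearIndependent, finrank_span_eq_card h.linearIndependent]

theorem orthonormal_cons_cons_of_span_pair_eq {k : ℕ} {p q u a : E} {s : Fin k → E}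
    (h : Orthonormal 𝕜 (Fin.cons p (Fin.cons q s) : Fin (k + 2) → E))
    (hua : Orthonormal 𝕜 ![u, a]) (hspan : span 𝕜 {u, a} = span 𝕜 {p, q}) :
    Orthonormal 𝕜 (Fin.cons u (Fin.cons a s) : Fin (k + 2) → E) ∧
      span 𝕜 (range (Fin.cons u (Fin.cons a s) : Fin (k + 2) → E)) =
        span 𝕜 (range (Fin.cons p (Fin.cons q s) : Fin (k + 2) → E)) := by
  have hsplit : ∀ x y : E, span 𝕜 (range (Fin.cons x (Fin.cons y s) : Fin (k + 2) → E)) =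
      span 𝕜 {x, y} ⊔ span 𝕜 (range s) := fun x y => by
    rw [span_range_cons, span_range_cons, ← sup_assoc, span_insert]
  obtain ⟨-, hqs_on, hpqs⟩ := orthonormal_cons_iff.mp h
  obtain ⟨-, hs, hqs⟩ := orthonormal_cons_iff.mp hqs_on
  obtain ⟨hu, ha, hua⟩ := orthonormal_pair_iff.mp hua
  have hs_perp : span 𝕜 (range s) ≤ (span 𝕜 {u, a})ᗮ := by
    rw [hspan, span_insert, ← inf_orthogonal]
    exact le_inf (le_trans (by rw [span_range_cons]; exact le_sup_right) hpqs) hqs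
  refine ⟨orthonormal_cons_iff.mpr ⟨hu, orthonormal_cons_iff.mpr ⟨ha, hs, ?_⟩, ?_⟩,
    by rw [hsplit, hsplit, hspan]⟩
  · exact hs_perp.trans (orthogonal_le (span_mono (by simp)))
  · rw [span_range_cons]
    refine sup_le ?_ (hs_perp.trans (orthogonal_le (span_mono (by simp))))
    exact (span_singleton_le_iff_mem _ _).mpr (mem_orthogonal_singleton_iff_inner_right.mpr hua)

theorem exists_smul_add_of_mem_span_cons {k : ℕ} {p u : E} {r : Fin k → E}
    (h : Orthonormal 𝕜 (Fin.cons p r : Fin (k + 1) → E)) (hu : ‖u‖ = 1)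
    (hmem : u ∈ span 𝕜 (range (Fin.cons p r : Fin (k + 1) → E))) :
    ∃ (c : 𝕜) (z : E), z ∈ span 𝕜 (range r) ∧ u = c • p + z ∧ ‖c‖ ^ 2 + ‖z‖ ^ 2 = 1 := by
  obtain ⟨hp, -, hpr⟩ := orthonormal_cons_iff.mp h
  rw [span_range_cons, mem_sup] at hmem
  obtain ⟨y, hy, z, hz, rfl⟩ := hmem
  obtain ⟨c, rfl⟩ := mem_span_singleton.mp hy
  have hpz : ⟪c • p, z⟫ = 0 := by
    rw [inner_smul_left, mem_orthogonal_singleton_iff_inner_right.mp (hpr hz), mul_zero]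
  refine ⟨c, z, hz, rfl, ?_⟩
  have hpyth := norm_add_sq_eq_norm_sq_add_norm_sq_of_inner_eq_zero _ _ hpz
  rw [hu, norm_smul, hp, mul_one] at hpyth
  linear_combination -hpyth

variable (𝕜) in
def IsPairInvariant (F : E → ℝ) : Prop :=
  ∀ v₁ v₂ w₁ w₂ : E, Orthonormal 𝕜 ![v₁, v₂] → Orthonormal 𝕜 ![w₁, w₂] →
    span 𝕜 {v₁, v₂} = span 𝕜 {w₁, w₂} → F v₁ + F v₂ = F w₁ + F w₂

variable (𝕜) in
def IsPhaseInvariant (F : E → ℝ) : Prop :=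
  ∀ (c : 𝕜) (y : E), ‖c‖ = 1 → ‖y‖ = 1 → F (c • y) = F y

variable {F : E → ℝ}

theorem IsPhaseInvariant.exists_orthonormal_cons_smul (hphase : IsPhaseInvariant 𝕜 F) {k : ℕ}
    {p : E} {r : Fin k → E} (h : Orthonormal 𝕜 (Fin.cons p r : Fin (k + 1) → E)) {c : 𝕜}
    (hc : ‖c‖ = 1) :
    ∃ s : Fin k → E, Orthonormal 𝕜 (Fin.cons (c • p) s : Fin (k + 1) → E) ∧
      span 𝕜 (range (Fin.cons (c • p) s : Fin (k + 1) → E)) =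
        span 𝕜 (range (Fin.cons p r : Fin (k + 1) → E)) ∧
      ∑ j, F ((Fin.cons (c • p) s : Fin (k + 1) → E) j) =
        ∑ j, F ((Fin.cons p r : Fin (k + 1) → E) j) := by
  have hline : (𝕜 ∙ c • p) = 𝕜 ∙ p :=
    span_singleton_smul_eq (isUnit_iff_ne_zero.mpr (norm_ne_zero_iff.mp (hc ▸ one_ne_zero))) p
  obtain ⟨hp, hr, hpr⟩ := orthonormal_cons_iff.mp h
  refine ⟨r, orthonormal_cons_iff.mpr ⟨by rw [norm_smul, hc, hp, one_mul], hr, hline ▸ hpr⟩,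
    by rw [span_range_cons, span_range_cons, hline], ?_⟩
  simp only [Fin.sum_univ_succ, Fin.cons_zero, Fin.cons_succ, hphase c p hc hp]

theorem exists_orthonormal_cons_of_mem_span (hphase : IsPhaseInvariant 𝕜 F)
    (hpair : IsPairInvariant 𝕜 F) {k : ℕ} {v : Fin (k + 1) → E} (hv : Orthonormal 𝕜 v)
    {u : E} (hu : ‖u‖ = 1) (hmem : u ∈ span 𝕜 (range v)) :
    ∃ s : Fin k → E, Orthonormal 𝕜 (Fin.cons u s : Fin (k + 1) → E) ∧
      span 𝕜 (range (Fin.cons u s : Fin (k + 1) → E)) = span 𝕜 (range v) ∧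
      ∑ j, F ((Fin.cons u s : Fin (k + 1) → E) j) = ∑ j, F (v j) := by
  induction k generalizing u with
  | zero =>
    cases v using Fin.consCases with | cons p r => ?_
    obtain ⟨c, z, hz, rfl, hcz⟩ := exists_smul_add_of_mem_span_cons hv hu hmem
    obtain rfl : z = 0 := by simpa using hz
    rw [add_zero]
    exact hphase.exists_orthonormal_cons_smul hv (by simpa [pow_eq_one_iff_of_nonneg] using hcz)
  | succ k ih =>
    cases v using Fin.consCases with | cons p r => ?_
    obtain ⟨c, z, hz, rfl, hcz⟩ := exists_smul_add_of_mem_span_cons hv hu hmem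
    rcases eq_or_ne z 0 with rfl | hz0
    · rw [add_zero]
      exact hphase.exists_orthonormal_cons_smul hv (by simpa [pow_eq_one_iff_of_nonneg] using hcz)
    -- `u = c • p + ‖z‖ • b`; make `b` the head of the tail, then rotate the plane of `p` and `b`.
    obtain ⟨hp, hr, hpr⟩ := orthonormal_cons_iff.mp hv
    set b : E := (‖z‖⁻¹ : 𝕜) • z
    have hb : ‖b‖ = 1 := norm_smul_inv_norm hz0
    have hzb : z = (‖z‖ : 𝕜) • b := by
      rw [smul_inv_smul₀ (by exact_mod_cast norm_ne_zero_iff.mpr hz0)]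
    obtain ⟨s, hs, hspan_s, hsum_s⟩ := ih hr hb (smul_mem _ _ hz)
    have hpbs : Orthonormal 𝕜 (Fin.cons p (Fin.cons b s) : Fin (k + 2) → E) :=
      orthonormal_cons_iff.mpr ⟨hp, hs, hspan_s ▸ hpr⟩
    have hpb : Orthonormal 𝕜 ![p, b] := orthonormal_pair_iff.mpr
      ⟨hp, hb, mem_orthogonal_singleton_iff_inner_right.mp (hpr (smul_mem _ _ hz))⟩
    obtain ⟨hua, hspan_ua⟩ :=
      orthonormal_rotate hpb (c := c) (d := (‖z‖ : 𝕜)) (by simpa using hcz)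
    obtain ⟨hon, hspan⟩ := orthonormal_cons_cons_of_span_pair_eq hpbs hua hspan_ua
    rw [hzb]
    refine ⟨_, hon, hspan.trans ?_, ?_⟩
    · rw [span_range_cons p (Fin.cons b s), hspan_s, span_range_cons]
    · have hrot := hpair _ _ _ _ hua hpb hspan_ua
      simp only [Fin.sum_univ_succ, Fin.cons_zero, Fin.cons_succ] at hsum_s ⊢
      linarith

theorem sum_eq_of_span_range_eq (hphase : IsPhaseInvariant 𝕜 F) (hpair : IsPairInvariant 𝕜 F)
    {k : ℕ} {v w : Fin k → E} (hv : Orthonormal 𝕜 v) (hw : Orthonormal 𝕜 w)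
    (hvw : span 𝕜 (range v) = span 𝕜 (range w)) : ∑ j, F (v j) = ∑ j, F (w j) := by
  induction k with
  | zero => simp
  | succ k ih =>
    cases w using Fin.consCases with | cons u t => ?_
    obtain ⟨hu, ht, -⟩ := orthonormal_cons_iff.mp hw
    obtain ⟨s, hs, hspan, hsum⟩ := exists_orthonormal_cons_of_mem_span hphase hpair hv hu
      (hvw ▸ subset_span ⟨0, rfl⟩)
    have hst : span 𝕜 (range s) = span 𝕜 (range t) := by
      rw [span_range_eq_inf_orthogonal_of_orthonormal_cons hs,
        span_range_eq_inf_orthogonal_of_orthonormal_cons hw, hspan, hvw]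
    rw [← hsum, Fin.sum_univ_succ, Fin.sum_univ_succ]
    simp only [Fin.cons_zero, Fin.cons_succ]
    rw [ih (orthonormal_cons_iff.mp hs).2.1 ht hst]

theorem IsPairInvariant.isPhaseInvariant [FiniteDimensional 𝕜 E] (hpair : IsPairInvariant 𝕜 F)
    (hdim : 1 < Module.finrank 𝕜 E) : IsPhaseInvariant 𝕜 F := by
  intro c y hc hy
  have hy0 : y ≠ 0 := norm_ne_zero_iff.mp (hy ▸ one_ne_zero)
  have : Nontrivial (𝕜 ∙ y)ᗮ := by
    rw [← Module.finrank_pos_iff (R := 𝕜)]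
    have := finrank_add_finrank_orthogonal (𝕜 ∙ y)
    rw [finrank_span_singleton hy0] at this
    omega
  obtain ⟨z, hz0⟩ := exists_ne (0 : (𝕜 ∙ y)ᗮ)
  set e : E := (‖(z : E)‖⁻¹ : 𝕜) • (z : E)
  have he : ‖e‖ = 1 := norm_smul_inv_norm (by simpa using hz0)
  have hye : ⟪y, e⟫ = 0 :=
    mem_orthogonal_singleton_iff_inner_right.mp ((𝕜 ∙ y)ᗮ.smul_mem _ z.2)
  have hcy : ⟪c • y, e⟫ = 0 := by rw [inner_smul_left, hye, mul_zero]
  have hspan : span 𝕜 {c • y, e} = span 𝕜 {y, e} := by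
    rw [span_insert, span_insert,
      span_singleton_smul_eq (isUnit_iff_ne_zero.mpr (norm_ne_zero_iff.mp (hc ▸ one_ne_zero)))]
  have := hpair _ _ _ _ (orthonormal_pair_iff.mpr ⟨by rw [norm_smul, hc, hy, one_mul], he, hcy⟩)
    (orthonormal_pair_iff.mpr ⟨hy, he, hye⟩) hspan
  linarith

theorem Orthonormal.smul_of_forall_norm_eq_one {ι : Type*} {v : ι → E} (hv : Orthonormal 𝕜 v)
    {g : ι → 𝕜} (hg : ∀ i, ‖g i‖ = 1) : Orthonormal 𝕜 fun i => g i • v i :=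
  ⟨fun i => by rw [norm_smul, hg, hv.1, one_mul],
    fun i j hij => show ⟪g i • v i, g j • v j⟫ = 0 by
      rw [inner_smul_left, inner_smul_right, hv.2 hij, mul_zero, mul_zero]⟩

theorem Orthonormal.exists_orthonormalBasis_coe_eq [FiniteDimensional 𝕜 E] {ι : Type*}
    [Fintype ι] (hcard : Module.finrank 𝕜 E = Fintype.card ι) {v : ι → E} (hv : Orthonormal 𝕜 v) :
    ∃ b : OrthonormalBasis ι 𝕜 E, ⇑b = v := by
  obtain ⟨b, hb⟩ := (hv.comp _ Subtype.val_injective).exists_orthonormalBasis_extension_of_card_eq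
    hcard (s := univ)
  exact ⟨b, funext fun i => hb i trivial⟩

theorem exists_orthonormalBasis_apply_eq [FiniteDimensional 𝕜 E] {ι : Type*} [Fintype ι]
    (hcard : Module.finrank 𝕜 E = Fintype.card ι) {x : E} (hx : ‖x‖ = 1) (i : ι) :
    ∃ b : OrthonormalBasis ι 𝕜 E, b i = x := by
  obtain ⟨b, hb⟩ := Orthonormal.exists_orthonormalBasis_extension_of_card_eq hcard
    (v := fun _ => x) (s := {i}) (orthonormal_subsingleton_iff.mpr fun _ => hx)
  exact ⟨b, hb i rfl⟩

end

theorem prodVec_smul_right {n m : ℕ} (c : ℂ) (x : EuclideanSpace ℂ (Fin n))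
    (y : EuclideanSpace ℂ (Fin m)) : prodVec x (c • y) = prodVec (c • x) y := by
  unfold prodVec
  congr 1
  ext p
  simp only [PiLp.smul_apply, smul_eq_mul]
  ring

theorem sum_prodVec_smul_left_eq {n m : ℕ} {f : EuclideanSpace ℂ (Fin n × Fin m) → ℝ} {W : ℝ}
    (hweight : ∀ (b₁ : OrthonormalBasis (Fin n) ℂ (EuclideanSpace ℂ (Fin n)))
      (b₂ : OrthonormalBasis (Fin m) ℂ (EuclideanSpace ℂ (Fin m))),
      ∑ j, ∑ k, f (prodVec (b₁ j) (b₂ k)) = W)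
    {x : EuclideanSpace ℂ (Fin n)} (hx : ‖x‖ = 1) {c : ℂ} (hc : ‖c‖ = 1)
    (b₂ : OrthonormalBasis (Fin m) ℂ (EuclideanSpace ℂ (Fin m))) :
    ∑ k, f (prodVec (c • x) (b₂ k)) = ∑ k, f (prodVec x (b₂ k)) := by
  obtain ⟨i₀⟩ : Nonempty (Fin n) := by
    rcases n with _ | n
    · simp [Subsingleton.elim x 0] at hx
    · exact ⟨0⟩
  obtain ⟨b₁, hb₁⟩ := exists_orthonormalBasis_apply_eq (𝕜 := ℂ) (by simp) hx i₀
  set g : Fin n → ℂ := Function.update 1 i₀ c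
  have hg : ∀ i, ‖g i‖ = 1 := fun i => by
    rcases eq_or_ne i i₀ with rfl | hi <;> simp [g, *]
  obtain ⟨B, hB⟩ := (b₁.orthonormal.smul_of_forall_norm_eq_one hg).exists_orthonormalBasis_coe_eq
    (by simp)
  have hrows : ∑ j, (∑ k, f (prodVec (B j) (b₂ k)) - ∑ k, f (prodVec (b₁ j) (b₂ k))) = 0 := by
    rw [Finset.sum_sub_distrib, hweight, hweight, sub_self]
  rw [Finset.sum_eq_single i₀ (fun i _ hi => by simp [hB, g, Function.update_of_ne hi])
    (by simp), sub_eq_zero] at hrows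
  simpa [hB, g, hb₁] using hrows

/-- Conversely: if a function on product unit vectors has constant sum `W` on
all product bases and is invariant under rotations within two-dimensional
local subspaces, then it satisfies the no-signalling condition: the sum over
any local orthonormal basis of the second factor, with a fixed unit vector in
the first factor, is basis-independent. -/
theorem two_dim_invariance_implies_nonsignalling {n m : ℕ}
    (f : EuclideanSpace ℂ (Fin n × Fin m) → ℝ) (W : ℝ)
    (hweight : ∀ (b₁ : OrthonormalBasis (Fin n) ℂ (EuclideanSpace ℂ (Fin n)))
      (b₂ : OrthonormalBasis (Fin m) ℂ (EuclideanSpace ℂ (Fin m))),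
      ∑ j, ∑ k, f (prodVec (b₁ j) (b₂ k)) = W)
    (hinv : ∀ (x : EuclideanSpace ℂ (Fin n)), ‖x‖ = 1 →
      ∀ (v₁ v₂ w₁ w₂ : EuclideanSpace ℂ (Fin m)),
      Orthonormal ℂ ![v₁, v₂] → Orthonormal ℂ ![w₁, w₂] →
      Submodule.span ℂ {v₁, v₂} = Submodule.span ℂ {w₁, w₂} →
      f (prodVec x v₁) + f (prodVec x v₂) = f (prodVec x w₁) + f (prodVec x w₂))
    (x : EuclideanSpace ℂ (Fin n)) (hx : ‖x‖ = 1)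
    (v w : OrthonormalBasis (Fin m) ℂ (EuclideanSpace ℂ (Fin m))) :
    ∑ j, f (prodVec x (v j)) = ∑ k, f (prodVec x (w k)) := by
  suffices hphase : IsPhaseInvariant ℂ fun y => f (prodVec x y) by
    refine sum_eq_of_span_range_eq hphase (hinv x hx) v.orthonormal w.orthonormal ?_
    rw [← v.coe_toBasis, ← w.coe_toBasis, v.toBasis.span_eq, w.toBasis.span_eq]
  rcases Nat.lt_or_ge 1 m with hm | hm
  · exact IsPairInvariant.isPhaseInvariant (hinv x hx) (by simpa using hm)
  intro c y hc hy
  obtain rfl : m = 1 := by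
    interval_cases m
    · simp [Subsingleton.elim y 0] at hy
    · rfl
  obtain ⟨b₂, hb₂⟩ := exists_orthonormalBasis_apply_eq (𝕜 := ℂ) (by simp) hy (0 : Fin 1)
  simpa [prodVec_smul_right, hb₂] using sum_prodVec_smul_left_eq hweight hx hc b₂
end

section
/- Choi's theorem: a linear map φ : M_n(ℂ) → M_m(ℂ) is completely positive if and only if its Choi matrix ρ_φ := ∑_{i,j} E_{ij} ⊗ φ(E_{ij}) is positive semidefinite, where E_{ij} are the matrix units. -/
/-!
Write `ρ_φ` for the Choi matrix and `id ⊗ φ` for the blockwise application of `φ`. For a vector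
`v : α × ι → 𝕜` with reshaping `V : Matrix α ι 𝕜`, the image of the rank-one matrix `v v*` is the
congruence `(V ⊗ 1) ρ_φ (V ⊗ 1)*`. Every positive semidefinite matrix is a sum of such `v v*`, so
`ρ_φ ≥ 0` makes `φ` completely positive. Conversely `ρ_φ` is itself the image of `ω ω*`, where
`ω = ∑ᵢ eᵢ ⊗ eᵢ` is the reshaping of the identity matrix.
-/

open Matrix ComplexOrder
open scoped Kronecker

namespace Matrix

variable {R 𝕜 ι κ α : Type*} [Fintype ι] [DecidableEq ι]

section CommSemiring

variable [CommSemiring R]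

lemma linearMap_eq_sum_smul_single {N : Type*} [AddCommMonoid N] [Module R N]
    (φ : Matrix ι ι R →ₗ[R] N) (A : Matrix ι ι R) :
    φ A = ∑ i, ∑ j, A i j • φ (single i j 1) := by
  conv_lhs => rw [matrix_eq_sum_single A]
  simp only [map_sum, ← map_smul, smul_single, smul_eq_mul, mul_one]

def choiMatrix (φ : Matrix ι ι R →ₗ[R] Matrix κ κ R) : Matrix (ι × κ) (ι × κ) R :=
  ∑ i, ∑ j, single i j 1 ⊗ₖ φ (single i j 1)

lemma choiMatrix_apply (φ : Matrix ι ι R →ₗ[R] Matrix κ κ R) (i j : ι) (c d : κ) :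
    choiMatrix φ (i, c) (j, d) = φ (single i j 1) c d := by
  simp [choiMatrix, sum_apply, single, ite_and]

def ampliation (φ : Matrix ι ι R →ₗ[R] Matrix κ κ R) :
    Matrix (α × ι) (α × ι) R →ₗ[R] Matrix (α × κ) (α × κ) R where
  toFun M := of fun p q => φ (of fun r s => M (p.1, r) (q.1, s)) p.2 q.2
  map_add' M N := by
    ext p q
    change _ = (φ _ + φ _) p.2 q.2
    rw [← map_add]
    rfl
  map_smul' c M := by
    ext p q
    change _ = (c • φ _) p.2 q.2
    rw [← map_smul]
    rfl

lemma ampliation_apply (φ : Matrix ι ι R →ₗ[R] Matrix κ κ R) (M : Matrix (α × ι) (α × ι) R)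
    (p q : α) (c d : κ) :
    ampliation φ M (p, c) (q, d) = ∑ i, ∑ j, M (p, i) (q, j) * choiMatrix φ (i, c) (j, d) := by
  simp only [ampliation, LinearMap.coe_mk, AddHom.coe_mk, of_apply, choiMatrix_apply]
  rw [linearMap_eq_sum_smul_single φ]
  simp [sum_apply]

variable [StarRing R] [Fintype κ] [DecidableEq κ]

lemma ampliation_vecMulVec (φ : Matrix ι ι R →ₗ[R] Matrix κ κ R) (v : α × ι → R) :
    ampliation φ (vecMulVec v (star v)) =
      (of (Function.curry v) ⊗ₖ (1 : Matrix κ κ R)) * choiMatrix φ *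
        (of (Function.curry v) ⊗ₖ (1 : Matrix κ κ R))ᴴ := by
  ext ⟨p, c⟩ ⟨q, d⟩
  simp only [ampliation_apply, vecMulVec_apply, Pi.star_apply, of_apply, Function.curry_apply,
    mul_apply, conjTranspose_apply, kroneckerMap_apply, one_apply, mul_ite, mul_one, mul_zero,
    ite_mul, zero_mul, apply_ite star, star_zero, Fintype.sum_prod_type, Finset.sum_ite_eq,
    Finset.mem_univ, if_true, Finset.sum_mul]
  rw [Finset.sum_comm]
  exact Finset.sum_congr rfl fun i _ => Finset.sum_congr rfl fun j _ => by ring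

lemma ampliation_vecMulVec_one (φ : Matrix ι ι R →ₗ[R] Matrix κ κ R) :
    ampliation φ (vecMulVec (fun p => (1 : Matrix ι ι R) p.1 p.2)
      (star fun p => (1 : Matrix ι ι R) p.1 p.2)) = choiMatrix φ := by
  rw [ampliation_vecMulVec, show of (Function.curry fun p : ι × ι => (1 : Matrix ι ι R) p.1 p.2)
    = 1 from rfl, one_kronecker_one, conjTranspose_one, one_mul, mul_one]

end CommSemiring

theorem PosSemidef.ampliation [RCLike 𝕜] [Fintype κ] [DecidableEq κ] [Fintype α]
    {M : Matrix (α × ι) (α × ι) 𝕜} (hM : M.PosSemidef) {φ : Matrix ι ι 𝕜 →ₗ[𝕜] Matrix κ κ 𝕜}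
    (hφ : (choiMatrix φ).PosSemidef) :
    (ampliation φ M).PosSemidef := by
  obtain ⟨r, v, rfl⟩ := posSemidef_iff_eq_sum_vecMulVec.mp hM
  rw [map_sum]
  refine posSemidef_sum _ fun t _ => ?_
  rw [ampliation_vecMulVec]
  exact hφ.mul_mul_conjTranspose_same _

end Matrix

/-- Choi's theorem: a linear map `φ : Mₙ(ℂ) → Mₘ(ℂ)` is completely positive
(all ampliations `id_k ⊗ φ` preserve positive semidefiniteness) if and only
if its Choi matrix `ρ_φ = ∑_{i,j} E_{ij} ⊗ φ(E_{ij})` is positive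
semidefinite. -/
theorem choi_theorem {n m : ℕ}
    (φ : Matrix (Fin n) (Fin n) ℂ →ₗ[ℂ] Matrix (Fin m) (Fin m) ℂ) :
    (∀ (k : ℕ) (M : Matrix (Fin k × Fin n) (Fin k × Fin n) ℂ), M.PosSemidef →
      (Matrix.of fun p q : Fin k × Fin m =>
        (φ (Matrix.of fun r s => M (p.1, r) (q.1, s))) p.2 q.2).PosSemidef)
    ↔ (∑ i : Fin n, ∑ j : Fin n,
        (Matrix.single i j (1 : ℂ)) ⊗ₖ φ (Matrix.single i j 1)).PosSemidef := by
  refine ⟨fun hφ => ?_, fun hρ k M hM => hM.ampliation hρ⟩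
  show (choiMatrix φ).PosSemidef
  rw [← ampliation_vecMulVec_one]
  exact hφ n _ (posSemidef_vecMulVec_self_star _)
end

section
/- If (vⱼ)ⱼ is an orthonormal basis of H₁ and for each j, (uʲₖ)ₖ is an orthonormal basis of H₂, then the family (vⱼ ⊗ uʲₖ)_{j,k} is an orthonormal basis of H₁ ⊗ H₂. -/
lemma inner_prodVec {n m : ℕ} (x x' : EuclideanSpace ℂ (Fin n))
    (y y' : EuclideanSpace ℂ (Fin m)) :
    inner ℂ (prodVec x y) (prodVec x' y') = inner ℂ x x' * inner ℂ y y' := by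
  simp only [prodVec, EuclideanSpace.inner_eq_star_dotProduct, dotProduct,
    Fintype.sum_prod_type, Finset.sum_mul_sum]
  simp [mul_mul_mul_comm]

lemma Orthonormal.prodVec {ι κ : Type*} {n m : ℕ} {v : ι → EuclideanSpace ℂ (Fin n)}
    {u : ι → κ → EuclideanSpace ℂ (Fin m)} (hv : Orthonormal ℂ v)
    (hu : ∀ i, Orthonormal ℂ (u i)) :
    Orthonormal ℂ fun p : ι × κ => prodVec (v p.1) (u p.1 p.2) := by
  classical
  rw [orthonormal_iff_ite]
  rintro ⟨i, k⟩ ⟨i', k'⟩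
  rw [inner_prodVec]
  rcases eq_or_ne i i' with rfl | hi
  · simp [orthonormal_iff_ite.mp (hu i), hv.1 i]
  · simp [orthonormal_iff_ite.mp hv, hi]

/-- If `(vⱼ)` is an orthonormal basis of `H₁` and for each `j`, `(uʲₖ)` is an
orthonormal basis of `H₂`, then the family `(vⱼ ⊗ uʲₖ)` is an orthonormal
basis of `H₁ ⊗ H₂`. -/
theorem conditional_product_basis_is_orthonormal_basis {n m : ℕ}
    (v : OrthonormalBasis (Fin n) ℂ (EuclideanSpace ℂ (Fin n)))
    (u : Fin n → OrthonormalBasis (Fin m) ℂ (EuclideanSpace ℂ (Fin m))) :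
    Orthonormal ℂ (fun jk : Fin n × Fin m => prodVec (v jk.1) (u jk.1 jk.2)) ∧
      Submodule.span ℂ
        (Set.range fun jk : Fin n × Fin m => prodVec (v jk.1) (u jk.1 jk.2)) = ⊤ := by
  have horth := v.orthonormal.prodVec fun j => (u j).orthonormal
  exact ⟨horth, horth.linearIndependent.span_eq_top_of_card_eq_finrank' (by simp)⟩
end
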